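/- For λ ≥ 2, if t(0)=t(1)=...=t(j−1)=1 and L(j,j+3) is a 2-path (so t(j)=t(j+3)=1 and t(j+1)=t(j+2)=2), then OPT(0,n−1) = 1 + min{ OPT_{→1}(0,j) + OPT_{2←}(j+3,n−1), OPT_{→2}(0,j) + OPT_{1←}(j+3,n−1) }. -/

import Mathlib

open Finset

/-- Path adjacency on ℕ: `u` and `v` are consecutive. -/
def pAdj (u v : ℕ) : Prop := u + 1 = v ∨ v + 1 = u

instance : DecidableRel pAdj := fun u v => by unfold pAdj; infer_instance

/-- Influence process on the node set `S` of a path, thresholds `t`, incentives `p`: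
at round 0 exactly the nodes with `p v = t v` are influenced; afterwards a node is
influenced once the number of already influenced neighbours reaches `t v - p v`. -/
def infl (S : Finset ℕ) (t p : ℕ → ℕ) : ℕ → Finset ℕ
  | 0 => S.filter fun v => p v = t v
  | ℓ + 1 => infl S t p ℓ ∪ S.filter fun v =>
      t v - p v ≤ ((infl S t p ℓ).filter fun u => pAdj u v).card

/-- `OPT t lam j k`: minimum cost of incentives influencing all of the subpath
`L(j,k)` within `lam` rounds. -/
noncomputable def OPT (t : ℕ → ℕ) (lam j k : ℕ) : ℕ :=
  sInf {c : ℕ | ∃ p : ℕ → ℕ, (∀ i ∈ Icc j k, p i ≤ t i) ∧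
    infl (Icc j k) t p lam = Icc j k ∧ c = ∑ i ∈ Icc j k, p i}

/-- `OPTcon t lam j k ℓ v`: minimum cost of incentives influencing all of the subpath
`L(j,k)` within `lam` rounds, with the additional requirement that the endpoint `v` is
influenced by round `lam - ℓ` (using only influence from within `L(j,k)`). -/
noncomputable def OPTcon (t : ℕ → ℕ) (lam j k ℓ v : ℕ) : ℕ :=
  sInf {c : ℕ | ∃ p : ℕ → ℕ, (∀ i ∈ Icc j k, p i ≤ t i) ∧
    infl (Icc j k) t p lam = Icc j k ∧ v ∈ infl (Icc j k) t p (lam - ℓ) ∧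
    c = ∑ i ∈ Icc j k, p i}

/-- `OPTleft t lam j k`: as `OPT`, but the right endpoint `k` receives one unit of
influence from `k+1`, i.e. its threshold is reduced by one. -/
noncomputable def OPTleft (t : ℕ → ℕ) (lam j k : ℕ) : ℕ :=
  sInf {c : ℕ | ∃ p : ℕ → ℕ,
    (∀ i ∈ Icc j k, p i ≤ Function.update t k (t k - 1) i) ∧
    infl (Icc j k) (Function.update t k (t k - 1)) p lam = Icc j k ∧
    c = ∑ i ∈ Icc j k, p i}

/-!
The interior nodes `j+1`, `j+2` of the 2-path have threshold 2, so an unpaid one is influenced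
only after a neighbour. For the upper bound, glue optimal constrained solutions of the two
outer blocks and pay 1 on one interior node: e.g. with `j+3` influenced by round `λ-2`, paying
`j+2` lets it follow by `λ-1`, and then `j, j+2` influence `j+1` by `λ`.

For the lower bound, compare the rounds in which `j+1`, `j+2` become influenced in an optimal
solution. Unless the two interior nodes are paid 3 or more together, the earlier of them was
triggered from outside, so its outer neighbour `j` (or `j+3`) was influenced strictly before and
the adjacent block never used the edge into the 2-path: restricted to that block, the solution
is feasible with the required deadline. The other block is handled the same way, or repaired by
paying its threshold-1 endpoint in full, at the price of the unit saved in the middle.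
-/

section Influence

variable {S A : Finset ℕ} {t p q : ℕ → ℕ}

lemma infl_subset : ∀ ℓ, infl S t p ℓ ⊆ S
  | 0 => filter_subset _ _
  | ℓ + 1 => union_subset (infl_subset ℓ) (filter_subset _ _)

lemma infl_mono : Monotone (infl S t p) :=
  monotone_nat_of_le_succ fun _ => subset_union_left

lemma infl_mono_set (h : S ⊆ A) : ∀ ℓ, infl S t p ℓ ⊆ infl A t p ℓ
  | 0 => filter_subset_filter _ h
  | ℓ + 1 => union_subset_union (infl_mono_set h ℓ) fun v hv => by
      rw [mem_filter] at hv ⊢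
      exact ⟨h hv.1, hv.2.trans (card_le_card (filter_subset_filter _ (infl_mono_set h ℓ)))⟩

lemma infl_congr (h : ∀ v ∈ S, p v = q v) : ∀ ℓ, infl S t p ℓ = infl S t q ℓ
  | 0 => filter_congr fun v hv => by rw [h v hv]
  | ℓ + 1 => by
    rw [infl, infl, infl_congr h ℓ]
    congr 1
    exact filter_congr fun v hv => by rw [h v hv]

lemma infl_self : ∀ ℓ, infl S t t ℓ = S
  | 0 => filter_true_of_mem fun _ _ => rfl
  | ℓ + 1 => by rw [infl, infl_self ℓ, union_eq_left]; exact filter_subset _ _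

lemma mem_infl_of_eq {v : ℕ} (hv : v ∈ S) (h : p v = t v) (ℓ : ℕ) : v ∈ infl S t p ℓ :=
  infl_mono (Nat.zero_le ℓ) (mem_filter.mpr ⟨hv, h⟩)

lemma mem_infl_succ_of_card_le {v ℓ : ℕ} {N : Finset ℕ} (hv : v ∈ S)
    (hN : ∀ u ∈ N, u ∈ infl S t p ℓ ∧ pAdj u v) (h : t v - p v ≤ #N) :
    v ∈ infl S t p (ℓ + 1) :=
  mem_union_right _ <| mem_filter.mpr ⟨hv, h.trans <| card_le_card fun u hu =>
    mem_filter.mpr (hN u hu)⟩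

lemma exists_lt_le_card_of_mem_infl {v ℓ : ℕ} (h : v ∈ infl S t p ℓ) (hv : p v ≠ t v) :
    ∃ m < ℓ, t v - p v ≤ #{u ∈ infl S t p m | pAdj u v} := by
  induction ℓ with
  | zero => exact absurd (mem_filter.mp h).2 hv
  | succ ℓ ih =>
    rcases mem_union.mp h with h | h
    · obtain ⟨m, hm, hcard⟩ := ih h
      exact ⟨m, by omega, hcard⟩
    · exact ⟨ℓ, by omega, (mem_filter.mp h).2⟩

end Influence

section Rounds

variable {S : Finset ℕ} {t p : ℕ → ℕ} {u v w ℓ : ℕ}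

/-- Junk value `0` if `v` is never influenced. -/
noncomputable def inflRound (S : Finset ℕ) (t p : ℕ → ℕ) (v : ℕ) : ℕ :=
  sInf {ℓ | v ∈ infl S t p ℓ}

lemma inflRound_le (h : v ∈ infl S t p ℓ) : inflRound S t p v ≤ ℓ := Nat.sInf_le h

lemma mem_infl_inflRound (h : v ∈ infl S t p ℓ) : v ∈ infl S t p (inflRound S t p v) :=
  Nat.sInf_mem (s := {ℓ | v ∈ infl S t p ℓ}) ⟨ℓ, h⟩

lemma mem_infl_iff_inflRound_le {L : ℕ} (h : v ∈ infl S t p L) :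
    v ∈ infl S t p ℓ ↔ inflRound S t p v ≤ ℓ :=
  ⟨inflRound_le, fun hle => infl_mono hle (mem_infl_inflRound h)⟩

lemma mem_or_mem_of_pos_card {s : Finset ℕ} (huv : u + 1 = v) (hvw : v + 1 = w)
    (h : 0 < #{x ∈ s | pAdj x v}) : u ∈ s ∨ w ∈ s := by
  obtain ⟨x, hx⟩ := card_pos.mp h
  obtain ⟨hxs, hadj | hadj⟩ := mem_filter.mp hx
  · exact Or.inl (by rwa [show u = x by omega])
  · exact Or.inr (by rwa [show w = x by omega])

lemma mem_and_mem_of_two_le_card {s : Finset ℕ} (huv : u + 1 = v) (hvw : v + 1 = w)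
    (h : 2 ≤ #{x ∈ s | pAdj x v}) : u ∈ s ∧ w ∈ s := by
  have hsub : {x ∈ s | pAdj x v} ⊆ {u, w} := fun x hx => by
    obtain ⟨-, hadj | hadj⟩ := mem_filter.mp hx <;>
      simp only [mem_insert, mem_singleton] <;> omega
  have heq := eq_of_subset_of_card_le hsub ((card_le_two).trans h)
  have hu : u ∈ {x ∈ s | pAdj x v} := heq ▸ mem_insert_self _ _
  have hw : w ∈ {x ∈ s | pAdj x v} := heq ▸ mem_insert_of_mem (mem_singleton_self _)
  exact ⟨(mem_filter.mp hu).1, (mem_filter.mp hw).1⟩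

lemma inflRound_lt_or_lt (huv : u + 1 = v) (hvw : v + 1 = w) (h : v ∈ infl S t p ℓ)
    (hv : p v < t v) :
    inflRound S t p u < inflRound S t p v ∨ inflRound S t p w < inflRound S t p v := by
  obtain ⟨m, hm, hcard⟩ := exists_lt_le_card_of_mem_infl (mem_infl_inflRound h) hv.ne
  rcases mem_or_mem_of_pos_card huv hvw ((Nat.sub_pos_of_lt hv).trans_le hcard) with hu | hw
  · exact Or.inl ((inflRound_le hu).trans_lt hm)
  · exact Or.inr ((inflRound_le hw).trans_lt hm)

lemma inflRound_lt_and_lt (huv : u + 1 = v) (hvw : v + 1 = w) (h : v ∈ infl S t p ℓ)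
    (hv : 2 ≤ t v - p v) :
    inflRound S t p u < inflRound S t p v ∧ inflRound S t p w < inflRound S t p v := by
  obtain ⟨m, hm, hcard⟩ := exists_lt_le_card_of_mem_infl (mem_infl_inflRound h) (by omega)
  obtain ⟨hu, hw⟩ := mem_and_mem_of_two_le_card huv hvw (hv.trans hcard)
  exact ⟨(inflRound_le hu).trans_lt hm, (inflRound_le hw).trans_lt hm⟩

end Rounds

section Restrict

variable {S A : Finset ℕ} {t p q : ℕ → ℕ} {e w : ℕ}

/-- Influence inside a block `A` that meets the rest of `S` only along the edge `w — e` is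
reproduced by `A` alone, provided `e` is never helped by `w`: either `e` is seeded, or `w`
is never influenced before `e`. -/
lemma infl_inter_subset
    (hbd : ∀ v ∈ A, ∀ u ∈ S, pAdj u v → u ∉ A → u = w ∧ v = e)
    (hq : ∀ v ∈ A, v ≠ e → q v = p v) (hqe : q e = p e ∨ q e = t e)
    (hcut : q e = t e ∨ ∀ ℓ, w ∈ infl S t p ℓ → e ∈ infl S t p ℓ) :
    ∀ ℓ, infl S t p ℓ ∩ A ⊆ infl A t q ℓ
  | 0 => fun v hv => by
      obtain ⟨hvS, hvA⟩ := mem_inter.mp hv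
      obtain ⟨-, hpv⟩ := mem_filter.mp hvS
      refine mem_filter.mpr ⟨hvA, ?_⟩
      by_cases hve : v = e
      · subst hve; omega
      · rw [hq v hvA hve, hpv]
  | ℓ + 1 => fun v hv => by
      have ih := infl_inter_subset hbd hq hqe hcut ℓ
      obtain ⟨hvS, hvA⟩ := mem_inter.mp hv
      rcases mem_union.mp hvS with hvS | hvS
      · exact infl_mono (Nat.le_succ ℓ) (ih (mem_inter.mpr ⟨hvS, hvA⟩))
      obtain ⟨-, hcard⟩ := mem_filter.mp hvS
      by_cases hwe : v = e ∧ w ∈ infl S t p ℓ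
      · obtain ⟨rfl, hw⟩ := hwe
        rcases hcut with hcut | hcut
        · exact mem_infl_of_eq hvA hcut _
        · exact infl_mono (Nat.le_succ ℓ) (ih (mem_inter.mpr ⟨hcut ℓ hw, hvA⟩))
      refine mem_infl_succ_of_card_le (N := {u ∈ infl S t p ℓ | pAdj u v}) hvA
        (fun u hu => ?_) ?_
      · obtain ⟨huS, hadj⟩ := mem_filter.mp hu
        have huA : u ∈ A := by
          by_contra huA
          obtain ⟨rfl, rfl⟩ := hbd v hvA u (infl_subset ℓ huS) hadj huA
          exact hwe ⟨rfl, huS⟩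
        exact ⟨ih (mem_inter.mpr ⟨huS, huA⟩), hadj⟩
      · have hres : t v - q v ≤ t v - p v := by
          by_cases hve : v = e
          · subst hve; omega
          · rw [hq v hvA hve]
        exact hres.trans hcard

lemma infl_restrict_eq {ℓ : ℕ} (hA : A ⊆ S)
    (hbd : ∀ v ∈ A, ∀ u ∈ S, pAdj u v → u ∉ A → u = w ∧ v = e)
    (hq : ∀ v ∈ A, v ≠ e → q v = p v) (hqe : q e = p e ∨ q e = t e)
    (hcut : q e = t e ∨ ∀ ℓ, w ∈ infl S t p ℓ → e ∈ infl S t p ℓ)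
    (hfull : infl S t p ℓ = S) : infl A t q ℓ = A :=
  (infl_subset ℓ).antisymm fun _ hv =>
    infl_inter_subset hbd hq hqe hcut ℓ (mem_inter.mpr ⟨hfull.symm ▸ hA hv, hv⟩)

end Restrict

lemma OPT_spec (t : ℕ → ℕ) (lam a b : ℕ) :
    ∃ p : ℕ → ℕ, (∀ i ∈ Icc a b, p i ≤ t i) ∧ infl (Icc a b) t p lam = Icc a b ∧
      OPT t lam a b = ∑ i ∈ Icc a b, p i := by
  obtain ⟨p, hp, hfull, hsum⟩ := Nat.sInf_mem (s := {c : ℕ | ∃ p : ℕ → ℕ,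
    (∀ i ∈ Icc a b, p i ≤ t i) ∧ infl (Icc a b) t p lam = Icc a b ∧
      c = ∑ i ∈ Icc a b, p i})
    ⟨_, t, fun _ _ => le_rfl, infl_self lam, rfl⟩
  exact ⟨p, hp, hfull, hsum⟩

lemma OPT_le {t p : ℕ → ℕ} {lam a b : ℕ} (hp : ∀ i ∈ Icc a b, p i ≤ t i)
    (hfull : infl (Icc a b) t p lam = Icc a b) : OPT t lam a b ≤ ∑ i ∈ Icc a b, p i :=
  Nat.sInf_le ⟨p, hp, hfull, rfl⟩

lemma OPTcon_spec (t : ℕ → ℕ) (lam d : ℕ) {a b v : ℕ} (hv : v ∈ Icc a b) :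
    ∃ p : ℕ → ℕ, (∀ i ∈ Icc a b, p i ≤ t i) ∧ infl (Icc a b) t p lam = Icc a b ∧
      v ∈ infl (Icc a b) t p (lam - d) ∧ OPTcon t lam a b d v = ∑ i ∈ Icc a b, p i := by
  obtain ⟨p, hp, hfull, hv, hsum⟩ := Nat.sInf_mem (s := {c : ℕ | ∃ p : ℕ → ℕ,
    (∀ i ∈ Icc a b, p i ≤ t i) ∧ infl (Icc a b) t p lam = Icc a b ∧
      v ∈ infl (Icc a b) t p (lam - d) ∧ c = ∑ i ∈ Icc a b, p i})
    ⟨_, t, fun _ _ => le_rfl, infl_self lam, by rwa [infl_self], rfl⟩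
  exact ⟨p, hp, hfull, hv, hsum⟩

lemma OPTcon_le {t p : ℕ → ℕ} {lam a b d v : ℕ} (hp : ∀ i ∈ Icc a b, p i ≤ t i)
    (hfull : infl (Icc a b) t p lam = Icc a b) (hv : v ∈ infl (Icc a b) t p (lam - d)) :
    OPTcon t lam a b d v ≤ ∑ i ∈ Icc a b, p i :=
  Nat.sInf_le ⟨p, hp, hfull, hv, rfl⟩

section Blocks

variable {S : Finset ℕ} {t p : ℕ → ℕ} {lam a b d e w : ℕ}

lemma OPTcon_le_sum_of_cut (hA : Icc a b ⊆ S)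
    (hbd : ∀ v ∈ Icc a b, ∀ u ∈ S, pAdj u v → u ∉ Icc a b → u = w ∧ v = e)
    (hp : ∀ i ∈ Icc a b, p i ≤ t i) (hfull : infl S t p lam = S) (he : e ∈ Icc a b)
    (hcut : inflRound S t p e ≤ inflRound S t p w) (hd : inflRound S t p e ≤ lam - d) :
    OPTcon t lam a b d e ≤ ∑ i ∈ Icc a b, p i := by
  have heS : e ∈ infl S t p lam := hfull.symm ▸ hA he
  have hcut' : ∀ ℓ, w ∈ infl S t p ℓ → e ∈ infl S t p ℓ := fun ℓ hw =>
    (mem_infl_iff_inflRound_le heS).mpr (hcut.trans (inflRound_le hw))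
  have hq : ∀ v ∈ Icc a b, v ≠ e → p v = p v := fun _ _ _ => rfl
  exact OPTcon_le hp (infl_restrict_eq hA hbd hq (Or.inl rfl) (Or.inr hcut') hfull)
    (infl_inter_subset hbd hq (Or.inl rfl) (Or.inr hcut') _
      (mem_inter.mpr ⟨(mem_infl_iff_inflRound_le heS).mpr hd, he⟩))

lemma OPTcon_le_sum_add_of_seed (hA : Icc a b ⊆ S)
    (hbd : ∀ v ∈ Icc a b, ∀ u ∈ S, pAdj u v → u ∉ Icc a b → u = w ∧ v = e)
    (hp : ∀ i ∈ Icc a b, p i ≤ t i) (hfull : infl S t p lam = S) (he : e ∈ Icc a b) :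
    OPTcon t lam a b d e ≤ ∑ i ∈ Icc a b, p i + (t e - p e) := by
  set q := Function.update p e (t e)
  have hq : ∀ v ∈ Icc a b, v ≠ e → q v = p v := fun v _ hv => Function.update_of_ne hv _ _
  have hqe : q e = t e := Function.update_self _ _ _
  have hqt : ∀ i ∈ Icc a b, q i ≤ t i := fun i hi => by
    by_cases h : i = e
    · rw [h, hqe]
    · rw [hq i hi h]; exact hp i hi
  have hsum : ∑ i ∈ Icc a b, q i = ∑ i ∈ Icc a b, p i + (t e - p e) := by
    rw [sum_update_of_mem he, sdiff_singleton_eq_erase, ← add_sum_erase _ _ he]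
    have := hp e he
    omega
  calc OPTcon t lam a b d e ≤ ∑ i ∈ Icc a b, q i :=
        OPTcon_le hqt (infl_restrict_eq hA hbd hq (Or.inr hqe) (Or.inl hqe) hfull)
          (mem_infl_of_eq he hqe _)
    _ = _ := hsum

end Blocks

lemma pAdj_boundary_Icc_zero {S : Finset ℕ} (k : ℕ) :
    ∀ v ∈ Icc 0 k, ∀ u ∈ S, pAdj u v → u ∉ Icc 0 k → u = k + 1 ∧ v = k := by
  intro v hv u _ hadj hu
  simp only [mem_Icc] at hv hu
  rcases hadj with h | h <;> omega

lemma pAdj_boundary_Icc_succ (k m : ℕ) :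
    ∀ v ∈ Icc (k + 1) m, ∀ u ∈ Icc 0 m, pAdj u v → u ∉ Icc (k + 1) m →
      u = k ∧ v = k + 1 := by
  intro v hv u hum hadj hu
  simp only [mem_Icc] at hv hum hu
  rcases hadj with h | h <;> omega

lemma sum_Icc_zero_split (f : ℕ → ℕ) {j m : ℕ} (hjm : j + 3 ≤ m) :
    ∑ i ∈ Icc 0 m, f i =
      ∑ i ∈ Icc 0 j, f i + (f (j + 1) + f (j + 2)) + ∑ i ∈ Icc (j + 3) m, f i := by
  have hunion : Icc 0 (j + 1 + 1) ∪ Icc (j + 3) m = Icc 0 m := by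
    ext; simp only [mem_union, mem_Icc]; omega
  have hdisj : Disjoint (Icc 0 (j + 1 + 1)) (Icc (j + 3) m) :=
    disjoint_left.mpr fun _ h h' => by simp only [mem_Icc] at h h'; omega
  rw [← hunion, sum_union hdisj, sum_Icc_succ_top (by omega), sum_Icc_succ_top (by omega)]
  ring

section Glue

variable {t pL pR : ℕ → ℕ} {j m x y ℓ : ℕ}

def glue (j : ℕ) (pL pR : ℕ → ℕ) (x y : ℕ) (v : ℕ) : ℕ :=
  if v ≤ j then pL v else if v = j + 1 then x else if v = j + 2 then y else pR v

lemma glue_of_le {v : ℕ} (h : v ≤ j) : glue j pL pR x y v = pL v := if_pos h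

lemma glue_of_ge {v : ℕ} (h : j + 3 ≤ v) : glue j pL pR x y v = pR v := by
  rw [glue, if_neg (by omega), if_neg (by omega), if_neg (by omega)]

lemma glue_one : glue j pL pR x y (j + 1) = x := by simp [glue]

lemma glue_two : glue j pL pR x y (j + 2) = y := by simp [glue]

lemma infl_left_subset_infl_glue (hjm : j ≤ m) :
    infl (Icc 0 j) t pL ℓ ⊆ infl (Icc 0 m) t (glue j pL pR x y) ℓ := by
  rw [infl_congr fun v hv => (glue_of_le (mem_Icc.mp hv).2).symm]
  exact infl_mono_set (Icc_subset_Icc le_rfl hjm) ℓ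

lemma infl_right_subset_infl_glue :
    infl (Icc (j + 3) m) t pR ℓ ⊆ infl (Icc 0 m) t (glue j pL pR x y) ℓ := by
  rw [infl_congr fun v hv => (glue_of_ge (mem_Icc.mp hv).1).symm]
  exact infl_mono_set (Icc_subset_Icc (Nat.zero_le _) le_rfl) ℓ

lemma OPT_le_of_glue {lam : ℕ} (hjm : j + 3 ≤ m)
    (hpL : ∀ i ∈ Icc 0 j, pL i ≤ t i) (hL : infl (Icc 0 j) t pL lam = Icc 0 j)
    (hpR : ∀ i ∈ Icc (j + 3) m, pR i ≤ t i)
    (hR : infl (Icc (j + 3) m) t pR lam = Icc (j + 3) m)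
    (hx : x ≤ t (j + 1)) (hy : y ≤ t (j + 2))
    (h1 : j + 1 ∈ infl (Icc 0 m) t (glue j pL pR x y) lam)
    (h2 : j + 2 ∈ infl (Icc 0 m) t (glue j pL pR x y) lam) :
    OPT t lam 0 m ≤ ∑ i ∈ Icc 0 j, pL i + (x + y) + ∑ i ∈ Icc (j + 3) m, pR i := by
  have hP : ∀ i ∈ Icc 0 m, glue j pL pR x y i ≤ t i := fun i hi => by
    obtain h | rfl | rfl | h : i ≤ j ∨ i = j + 1 ∨ i = j + 2 ∨ j + 3 ≤ i := by omega
    · rw [glue_of_le h]; exact hpL i (mem_Icc.mpr ⟨Nat.zero_le i, h⟩)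
    · rwa [glue_one]
    · rwa [glue_two]
    · rw [glue_of_ge h]; exact hpR i (mem_Icc.mpr ⟨h, (mem_Icc.mp hi).2⟩)
  have hfull : infl (Icc 0 m) t (glue j pL pR x y) lam = Icc 0 m := by
    refine (infl_subset lam).antisymm fun i hi => ?_
    obtain h | rfl | rfl | h : i ≤ j ∨ i = j + 1 ∨ i = j + 2 ∨ j + 3 ≤ i := by omega
    · exact infl_left_subset_infl_glue (by omega) (hL.symm ▸ mem_Icc.mpr ⟨Nat.zero_le i, h⟩)
    · exact h1
    · exact h2
    · exact infl_right_subset_infl_glue (hR.symm ▸ mem_Icc.mpr ⟨h, (mem_Icc.mp hi).2⟩)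
  calc OPT t lam 0 m ≤ ∑ i ∈ Icc 0 m, glue j pL pR x y i := OPT_le hP hfull
    _ = _ := by
      rw [sum_Icc_zero_split _ hjm, glue_one, glue_two,
        sum_congr rfl fun i hi => glue_of_le (mem_Icc.mp hi).2,
        sum_congr rfl fun i hi => glue_of_ge (mem_Icc.mp hi).1]

end Glue

section TwoPath

variable {t : ℕ → ℕ} {lam j m : ℕ}

lemma OPT_le_one_add_OPTcon_one_two (hlam : 2 ≤ lam) (hjm : j + 3 ≤ m)
    (ht1 : t (j + 1) = 2) (ht2 : t (j + 2) = 2) :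
    OPT t lam 0 m ≤ 1 + (OPTcon t lam 0 j 1 j + OPTcon t lam (j + 3) m 2 (j + 3)) := by
  obtain ⟨pL, hpL, hL, hLj, hLcost⟩ := OPTcon_spec t lam 1 (right_mem_Icc.mpr (Nat.zero_le j))
  obtain ⟨pR, hpR, hR, hRj, hRcost⟩ :=
    OPTcon_spec t lam 2 (left_mem_Icc.mpr (by omega : j + 3 ≤ m))
  have h2 : j + 2 ∈ infl (Icc 0 m) t (glue j pL pR 0 1) (lam - 2 + 1) := by
    refine mem_infl_succ_of_card_le (N := {j + 3}) (mem_Icc.mpr ⟨Nat.zero_le _, by omega⟩) ?_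
      (by simp [glue_two, ht2])
    simpa [pAdj] using infl_right_subset_infl_glue hRj
  have h1 : j + 1 ∈ infl (Icc 0 m) t (glue j pL pR 0 1) (lam - 1 + 1) := by
    refine mem_infl_succ_of_card_le (N := {j, j + 2}) (mem_Icc.mpr ⟨Nat.zero_le _, by omega⟩) ?_
      (by simp [glue_one, ht1])
    simp only [mem_insert, mem_singleton, forall_eq_or_imp, forall_eq]
    exact ⟨⟨infl_left_subset_infl_glue (by omega) hLj, Or.inl rfl⟩,
      ⟨by rwa [show lam - 1 = lam - 2 + 1 by omega], Or.inr rfl⟩⟩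
  have := OPT_le_of_glue hjm hpL hL hpR hR (by omega) (by omega)
    (by rwa [show lam = lam - 1 + 1 by omega]) (infl_mono (by omega) h2)
  omega

lemma OPT_le_one_add_OPTcon_two_one (hlam : 2 ≤ lam) (hjm : j + 3 ≤ m)
    (ht1 : t (j + 1) = 2) (ht2 : t (j + 2) = 2) :
    OPT t lam 0 m ≤ 1 + (OPTcon t lam 0 j 2 j + OPTcon t lam (j + 3) m 1 (j + 3)) := by
  obtain ⟨pL, hpL, hL, hLj, hLcost⟩ := OPTcon_spec t lam 2 (right_mem_Icc.mpr (Nat.zero_le j))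
  obtain ⟨pR, hpR, hR, hRj, hRcost⟩ :=
    OPTcon_spec t lam 1 (left_mem_Icc.mpr (by omega : j + 3 ≤ m))
  have h1 : j + 1 ∈ infl (Icc 0 m) t (glue j pL pR 1 0) (lam - 2 + 1) := by
    refine mem_infl_succ_of_card_le (N := {j}) (mem_Icc.mpr ⟨Nat.zero_le _, by omega⟩) ?_
      (by simp [glue_one, ht1])
    simpa [pAdj] using infl_left_subset_infl_glue (by omega) hLj
  have h2 : j + 2 ∈ infl (Icc 0 m) t (glue j pL pR 1 0) (lam - 1 + 1) := by
    refine mem_infl_succ_of_card_le (N := {j + 1, j + 3})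
      (mem_Icc.mpr ⟨Nat.zero_le _, by omega⟩) ?_
      (by simp [glue_two, ht2])
    simp only [mem_insert, mem_singleton, forall_eq_or_imp, forall_eq]
    exact ⟨⟨by rwa [show lam - 1 = lam - 2 + 1 by omega], Or.inl rfl⟩,
      ⟨infl_right_subset_infl_glue hRj, Or.inr rfl⟩⟩
  have := OPT_le_of_glue hjm hpL hL hpR hR (by omega) (by omega)
    (infl_mono (by omega) h1) (by rwa [show lam = lam - 1 + 1 by omega])
  omega

end TwoPath

section PathBlocks

variable {t p : ℕ → ℕ} {lam j m d : ℕ}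

lemma OPTcon_left_le_of_cut (hjm : j ≤ m) (hp : ∀ i ∈ Icc 0 m, p i ≤ t i)
    (hfull : infl (Icc 0 m) t p lam = Icc 0 m)
    (hcut : inflRound (Icc 0 m) t p j ≤ inflRound (Icc 0 m) t p (j + 1))
    (hd : inflRound (Icc 0 m) t p j ≤ lam - d) :
    OPTcon t lam 0 j d j ≤ ∑ i ∈ Icc 0 j, p i :=
  OPTcon_le_sum_of_cut (Icc_subset_Icc le_rfl hjm) (pAdj_boundary_Icc_zero j)
    (fun i hi => hp i (Icc_subset_Icc le_rfl hjm hi)) hfull (right_mem_Icc.mpr (Nat.zero_le j))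
    hcut hd

lemma OPTcon_left_le_of_seed (hjm : j ≤ m) (hp : ∀ i ∈ Icc 0 m, p i ≤ t i)
    (hfull : infl (Icc 0 m) t p lam = Icc 0 m) :
    OPTcon t lam 0 j d j ≤ ∑ i ∈ Icc 0 j, p i + (t j - p j) :=
  OPTcon_le_sum_add_of_seed (Icc_subset_Icc le_rfl hjm) (pAdj_boundary_Icc_zero j)
    (fun i hi => hp i (Icc_subset_Icc le_rfl hjm hi)) hfull (right_mem_Icc.mpr (Nat.zero_le j))

lemma OPTcon_right_le_of_cut (hjm : j + 3 ≤ m) (hp : ∀ i ∈ Icc 0 m, p i ≤ t i)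
    (hfull : infl (Icc 0 m) t p lam = Icc 0 m)
    (hcut : inflRound (Icc 0 m) t p (j + 3) ≤ inflRound (Icc 0 m) t p (j + 2))
    (hd : inflRound (Icc 0 m) t p (j + 3) ≤ lam - d) :
    OPTcon t lam (j + 3) m d (j + 3) ≤ ∑ i ∈ Icc (j + 3) m, p i :=
  OPTcon_le_sum_of_cut (Icc_subset_Icc (Nat.zero_le _) le_rfl) (pAdj_boundary_Icc_succ (j + 2) m)
    (fun i hi => hp i (Icc_subset_Icc (Nat.zero_le _) le_rfl hi)) hfull (left_mem_Icc.mpr hjm)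
    hcut hd

lemma OPTcon_right_le_of_seed (hjm : j + 3 ≤ m) (hp : ∀ i ∈ Icc 0 m, p i ≤ t i)
    (hfull : infl (Icc 0 m) t p lam = Icc 0 m) :
    OPTcon t lam (j + 3) m d (j + 3) ≤ ∑ i ∈ Icc (j + 3) m, p i + (t (j + 3) - p (j + 3)) :=
  OPTcon_le_sum_add_of_seed (Icc_subset_Icc (Nat.zero_le _) le_rfl)
    (pAdj_boundary_Icc_succ (j + 2) m)
    (fun i hi => hp i (Icc_subset_Icc (Nat.zero_le _) le_rfl hi)) hfull (left_mem_Icc.mpr hjm)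

end PathBlocks

section LowerBound

variable {t p : ℕ → ℕ} {lam j m : ℕ}

lemma mem_infl_of_infl_eq (hfull : infl (Icc 0 m) t p lam = Icc 0 m) {v : ℕ} (hv : v ≤ m) :
    v ∈ infl (Icc 0 m) t p lam :=
  hfull.symm ▸ mem_Icc.mpr ⟨Nat.zero_le v, hv⟩

lemma one_add_min_OPTcon_le_sum_of_unseeded (hjm : j + 3 ≤ m) (htj : t j = 1)
    (ht1 : t (j + 1) = 2) (ht2 : t (j + 2) = 2) (ht3 : t (j + 3) = 1)
    (hp : ∀ i ∈ Icc 0 m, p i ≤ t i) (hfull : infl (Icc 0 m) t p lam = Icc 0 m)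
    (ha : p (j + 1) ≤ 1) (hb : p (j + 2) ≤ 1) :
    1 + min (OPTcon t lam 0 j 1 j + OPTcon t lam (j + 3) m 2 (j + 3))
        (OPTcon t lam 0 j 2 j + OPTcon t lam (j + 3) m 1 (j + 3)) ≤
      ∑ i ∈ Icc 0 j, p i + (p (j + 1) + p (j + 2)) + ∑ i ∈ Icc (j + 3) m, p i := by
  have h1 := mem_infl_of_infl_eq hfull (by omega : j + 1 ≤ m)
  have h2 := mem_infl_of_infl_eq hfull (by omega : j + 2 ≤ m)
  have hr1 := inflRound_le h1
  have hr2 := inflRound_le h2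
  have hpj := hp j (mem_Icc.mpr ⟨Nat.zero_le j, by omega⟩)
  have hp3 := hp (j + 3) (mem_Icc.mpr ⟨Nat.zero_le _, hjm⟩)
  rcases le_or_gt (inflRound (Icc 0 m) t p (j + 1)) (inflRound (Icc 0 m) t p (j + 2))
    with h12 | h21
  · have h0 := (inflRound_lt_or_lt (u := j) (v := j + 1) (w := j + 2) rfl rfl h1
      (by omega)).resolve_right (by omega)
    have ha1 : 1 ≤ p (j + 1) := by
      by_contra! ha0
      have := inflRound_lt_and_lt (u := j) (v := j + 1) (w := j + 2) rfl rfl h1 (by omega)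
      omega
    rcases Nat.eq_zero_or_pos (p (j + 2)) with hb0 | hb1
    · obtain ⟨h12', h3⟩ :=
        inflRound_lt_and_lt (u := j + 1) (v := j + 2) (w := j + 3) rfl rfl h2 (by omega)
      have := OPTcon_left_le_of_cut (d := 2) (by omega) hp hfull h0.le (by omega)
      have := OPTcon_right_le_of_cut (d := 1) hjm hp hfull h3.le (by omega)
      omega
    · have := OPTcon_left_le_of_cut (d := 1) (by omega) hp hfull h0.le (by omega)
      have := OPTcon_right_le_of_seed (d := 2) hjm hp hfull
      omega
  · have h3 := (inflRound_lt_or_lt (u := j + 1) (v := j + 2) (w := j + 3) rfl rfl h2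
      (by omega)).resolve_left (by omega)
    have hb1 : 1 ≤ p (j + 2) := by
      by_contra! hb0
      have := inflRound_lt_and_lt (u := j + 1) (v := j + 2) (w := j + 3) rfl rfl h2 (by omega)
      omega
    rcases Nat.eq_zero_or_pos (p (j + 1)) with ha0 | ha1
    · obtain ⟨h0, -⟩ :=
        inflRound_lt_and_lt (u := j) (v := j + 1) (w := j + 2) rfl rfl h1 (by omega)
      have := OPTcon_left_le_of_cut (d := 1) (by omega) hp hfull h0.le (by omega)
      have := OPTcon_right_le_of_cut (d := 2) hjm hp hfull h3.le (by omega)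
      omega
    · have := OPTcon_left_le_of_seed (d := 2) (by omega : j ≤ m) hp hfull
      have := OPTcon_right_le_of_cut (d := 1) hjm hp hfull h3.le (by omega)
      omega

lemma one_add_min_OPTcon_le_OPT (hjm : j + 3 ≤ m) (htj : t j = 1)
    (ht1 : t (j + 1) = 2) (ht2 : t (j + 2) = 2) (ht3 : t (j + 3) = 1) :
    1 + min (OPTcon t lam 0 j 1 j + OPTcon t lam (j + 3) m 2 (j + 3))
        (OPTcon t lam 0 j 2 j + OPTcon t lam (j + 3) m 1 (j + 3)) ≤ OPT t lam 0 m := by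
  obtain ⟨p, hp, hfull, hcost⟩ := OPT_spec t lam 0 m
  rw [hcost, sum_Icc_zero_split p hjm]
  by_cases hunseeded : p (j + 1) ≤ 1 ∧ p (j + 2) ≤ 1
  · exact one_add_min_OPTcon_le_sum_of_unseeded hjm htj ht1 ht2 ht3 hp hfull
      hunseeded.1 hunseeded.2
  have hpj := hp j (mem_Icc.mpr ⟨Nat.zero_le j, by omega⟩)
  have hp1 := hp (j + 1) (mem_Icc.mpr ⟨Nat.zero_le _, by omega⟩)
  have hp2 := hp (j + 2) (mem_Icc.mpr ⟨Nat.zero_le _, by omega⟩)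
  have hp3 := hp (j + 3) (mem_Icc.mpr ⟨Nat.zero_le _, hjm⟩)
  have seedL := OPTcon_left_le_of_seed (d := 2) (by omega : j ≤ m) hp hfull
  obtain h | ⟨ha, hb⟩ | ⟨ha, hb⟩ : 3 ≤ p (j + 1) + p (j + 2) ∨
      (p (j + 1) = 2 ∧ p (j + 2) = 0) ∨ (p (j + 1) = 0 ∧ p (j + 2) = 2) := by omega
  · have := OPTcon_right_le_of_seed (d := 1) hjm hp hfull
    omega
  · have h2 := mem_infl_of_infl_eq hfull (by omega : j + 2 ≤ m)
    have h3 := (inflRound_lt_and_lt (u := j + 1) (v := j + 2) (w := j + 3) rfl rfl h2 (by omega)).2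
    have := OPTcon_right_le_of_cut (d := 1) hjm hp hfull h3.le
      (by have := inflRound_le h2; omega)
    omega
  · have h1 := mem_infl_of_infl_eq hfull (by omega : j + 1 ≤ m)
    have h0 := (inflRound_lt_and_lt (u := j) (v := j + 1) (w := j + 2) rfl rfl h1 (by omega)).1
    have := OPTcon_left_le_of_cut (d := 1) (by omega) hp hfull h0.le
      (by have := inflRound_le h1; omega)
    have := OPTcon_right_le_of_seed (d := 2) hjm hp hfull
    omega

end LowerBound

theorem two_path_length_two_decomposition_general (n lam j : ℕ) (t : ℕ → ℕ)
    (hlam : 2 ≤ lam) (hjn : j + 3 ≤ n - 1)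
    (htj : t j = 1)
    (ht1 : t (j + 1) = 2) (ht2 : t (j + 2) = 2) (ht3 : t (j + 3) = 1) :
    OPT t lam 0 (n - 1) =
      1 + min (OPTcon t lam 0 j 1 j + OPTcon t lam (j + 3) (n - 1) 2 (j + 3))
              (OPTcon t lam 0 j 2 j + OPTcon t lam (j + 3) (n - 1) 1 (j + 3)) := by
  refine le_antisymm ?_ (one_add_min_OPTcon_le_OPT hjn htj ht1 ht2 ht3)
  rw [← min_add_add_left]
  exact le_min (OPT_le_one_add_OPTcon_one_two hlam hjn ht1 ht2)
    (OPT_le_one_add_OPTcon_two_one hlam hjn ht1 ht2)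

/-- for `lam ≥ 2`, if `t(0) = ⋯ = t(j-1) = 1` and `L(j,j+3)` is a 2-path,
then `OPT(0,n-1) = 1 + min{OPT_→1(0,j) + OPT_2←(j+3,n-1), OPT_→2(0,j) + OPT_1←(j+3,n-1)}`. -/
theorem two_path_length_two_decomposition (n lam j : ℕ) (t : ℕ → ℕ)
    (hlam : 2 ≤ lam) (hjn : j + 3 ≤ n - 1) (hn : 1 ≤ n)
    (htr : ∀ v < n, t v = 1 ∨ t v = 2) (htn : t (n - 1) = 1)
    (hpre : ∀ i < j, t i = 1) (htj : t j = 1)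
    (ht1 : t (j + 1) = 2) (ht2 : t (j + 2) = 2) (ht3 : t (j + 3) = 1) :
    OPT t lam 0 (n - 1) =
      1 + min (OPTcon t lam 0 j 1 j + OPTcon t lam (j + 3) (n - 1) 2 (j + 3))
              (OPTcon t lam 0 j 2 j + OPTcon t lam (j + 3) (n - 1) 1 (j + 3)) :=
  two_path_length_two_decomposition_general n lam j t hlam hjn htj ht1 ht2 ht3
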